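/- arXiv:math/0604580 — 2 statements merged into one kernel-verified Lean document; each statement's English description precedes it below -/
import Mathlib

section
/- Let X = [[1,1],[0,1]] and Y = [[1,0],[-1,1]] in SL(2,ℤ). If A = (-I)·X^{a_1} Y^{-b_1} ⋯ X^{a_n} Y^{-b_n} with all a_i, b_j ≥ 0 and some a_i ≠ 0 and some b_j ≠ 0, then trace(A) < -2. -/
open Matrix

def Xm : Matrix.SpecialLinearGroup (Fin 2) ℤ :=
  ⟨!![1, 1; 0, 1], by norm_num [Matrix.det_fin_two_of]⟩

def Ym : Matrix.SpecialLinearGroup (Fin 2) ℤ :=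
  ⟨!![1, 0; -1, 1], by norm_num [Matrix.det_fin_two_of]⟩

def negI : Matrix.SpecialLinearGroup (Fin 2) ℤ :=
  ⟨!![-1, 0; 0, -1], by norm_num [Matrix.det_fin_two_of]⟩


/-!
Each factor `X^a Y^(-b) = !![1 + a b, a; b, 1]` is a matrix dominating the identity entrywise.
Such matrices form a monoid, and since they are nonnegative, a product of them dominates each of
its factors entrywise. So the product `P` of the factors has diagonal entries at least `1` and
off-diagonal entries at least some `a_i > 0` and some `b_j > 0`. From `det P = 1` the diagonal
entries are then not both `1`, so `trace P > 2`, and `trace A = -trace P < -2`.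
-/

namespace Matrix

section OneLE

variable {n R : Type*} [Fintype n] [DecidableEq n] [Semiring R] [PartialOrder R] [IsOrderedRing R]

omit [Fintype n] in
lemma one_apply_nonneg (i j : n) : 0 ≤ (1 : Matrix n n R) i j := by
  rw [one_apply]
  split_ifs <;> simp

lemma apply_le_mul_apply_of_one_le_right {M N : Matrix n n R} (hM : ∀ i j, 0 ≤ M i j)
    (hN : ∀ i j, (1 : Matrix n n R) i j ≤ N i j) (i j : n) : M i j ≤ (M * N) i j :=
  calc M i j = M i j * 1 := (mul_one _).symm
    _ ≤ M i j * N j j := by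
      gcongr
      · exact hM i j
      · simpa using hN j j
    _ ≤ ∑ k, M i k * N k j :=
      Finset.single_le_sum (f := fun k => M i k * N k j)
        (fun k _ => mul_nonneg (hM i k) ((one_apply_nonneg k j).trans (hN k j)))
        (Finset.mem_univ j)

lemma apply_le_mul_apply_of_one_le_left {M N : Matrix n n R}
    (hM : ∀ i j, (1 : Matrix n n R) i j ≤ M i j) (hN : ∀ i j, 0 ≤ N i j) (i j : n) :
    N i j ≤ (M * N) i j :=
  calc N i j = 1 * N i j := (one_mul _).symm
    _ ≤ M i i * N i j := by
      gcongr
      · exact hN i j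
      · simpa using hM i i
    _ ≤ ∑ k, M i k * N k j :=
      Finset.single_le_sum (f := fun k => M i k * N k j)
        (fun k _ => mul_nonneg ((one_apply_nonneg i k).trans (hM i k)) (hN k j))
        (Finset.mem_univ i)

variable (n R) in
def oneLESubmonoid : Submonoid (Matrix n n R) where
  carrier := {M | ∀ i j, (1 : Matrix n n R) i j ≤ M i j}
  one_mem' _ _ := le_rfl
  mul_mem' hM hN i j :=
    (hM i j).trans <| apply_le_mul_apply_of_one_le_right
      (fun i j => (one_apply_nonneg i j).trans (hM i j)) hN i j

lemma nonneg_of_mem_oneLESubmonoid {M : Matrix n n R} (hM : M ∈ oneLESubmonoid n R)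
    (i j : n) : 0 ≤ M i j :=
  (one_apply_nonneg i j).trans (hM i j)

lemma apply_le_list_prod_apply {L : List (Matrix n n R)}
    (hL : ∀ M ∈ L, M ∈ oneLESubmonoid n R) {M : Matrix n n R} (hM : M ∈ L) (i j : n) :
    M i j ≤ L.prod i j := by
  induction L with
  | nil => simp at hM
  | cons N L ih =>
    have hN : N ∈ oneLESubmonoid n R := hL N List.mem_cons_self
    have hL' : ∀ M ∈ L, M ∈ oneLESubmonoid n R := fun M h => hL M (List.mem_cons_of_mem N h)
    have hprod : L.prod ∈ oneLESubmonoid n R := Submonoid.list_prod_mem _ hL'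
    rw [List.prod_cons]
    rcases List.mem_cons.mp hM with rfl | hML
    · exact apply_le_mul_apply_of_one_le_right (nonneg_of_mem_oneLESubmonoid hN) hprod i j
    · exact (ih hL' hML).trans <|
        apply_le_mul_apply_of_one_le_left hN (nonneg_of_mem_oneLESubmonoid hprod) i j

lemma fin_two_mem_oneLESubmonoid_of_nonneg {x y : R} (hx : 0 ≤ x) (hy : 0 ≤ y) :
    !![1 + x * y, x; y, 1] ∈ oneLESubmonoid (Fin 2) R := by
  intro i j
  fin_cases i <;> fin_cases j <;> simp [hx, hy, le_add_of_nonneg_right (mul_nonneg hx hy)]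

end OneLE

lemma two_lt_trace_of_det_eq_one {R : Type*} [CommRing R] [LinearOrder R] [IsStrictOrderedRing R]
    {P : Matrix (Fin 2) (Fin 2) R} (hP : P ∈ oneLESubmonoid (Fin 2) R) (hdet : P.det = 1)
    (hoff : 0 < P 0 1 * P 1 0) : 2 < P.trace := by
  have h00 : 1 ≤ P 0 0 := by simpa using hP 0 0
  have h11 : 1 ≤ P 1 1 := by simpa using hP 1 1
  rw [det_fin_two] at hdet
  rw [trace_fin_two]
  by_contra! h
  have h00' : P 0 0 = 1 := by linarith
  have h11' : P 1 1 = 1 := by linarith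
  rw [h00', h11'] at hdet
  linarith

end Matrix

lemma coe_Xm_zpow (k : ℤ) : (↑(Xm ^ k) : Matrix (Fin 2) (Fin 2) ℤ) = !![1, k; 0, 1] :=
  ModularGroup.coe_T_zpow k

lemma coe_Ym_zpow (k : ℤ) : (↑(Ym ^ k) : Matrix (Fin 2) (Fin 2) ℤ) = !![1, 0; -k, 1] := by
  have coe_Ym : (↑Ym : Matrix (Fin 2) (Fin 2) ℤ) = !![1, 0; -1, 1] := rfl
  have coe_Ym_inv : (↑Ym⁻¹ : Matrix (Fin 2) (Fin 2) ℤ) = !![1, 0; 1, 1] := by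
    rw [Matrix.SpecialLinearGroup.coe_inv, coe_Ym, adjugate_fin_two_of, neg_neg, neg_zero]
  induction k with
  | zero => rw [zpow_zero, Matrix.SpecialLinearGroup.coe_one, one_fin_two, neg_zero]
  | succ k ih =>
    rw [_root_.zpow_add_one, Matrix.SpecialLinearGroup.coe_mul, ih, coe_Ym, mul_fin_two]
    congrm !![?_, ?_; ?_, ?_] <;> ring
  | pred k ih =>
    rw [_root_.zpow_sub_one, Matrix.SpecialLinearGroup.coe_mul, ih, coe_Ym_inv, mul_fin_two]
    congrm !![?_, ?_; ?_, ?_] <;> ring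

lemma coe_Xm_zpow_mul_Ym_zpow_neg (x y : ℤ) :
    (↑(Xm ^ x * Ym ^ (-y)) : Matrix (Fin 2) (Fin 2) ℤ) = !![1 + x * y, x; y, 1] := by
  rw [Matrix.SpecialLinearGroup.coe_mul, coe_Xm_zpow, coe_Ym_zpow, mul_fin_two]
  congrm !![?_, ?_; ?_, ?_] <;> ring

lemma coe_negI : (negI : Matrix (Fin 2) (Fin 2) ℤ) = -1 := by
  ext i j
  fin_cases i <;> fin_cases j <;> rfl

/-- If `A = (-I)·X^{a_1} Y^{-b_1} ⋯ X^{a_n} Y^{-b_n}` with all `a_i, b_j ≥ 0`,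
some `a_i ≠ 0` and some `b_j ≠ 0`, then `trace A < -2`. -/
theorem trace_lt_neg_two_of_typeII (n : ℕ) (a b : Fin n → ℕ)
    (ha : ∃ i, a i ≠ 0) (hb : ∃ j, b j ≠ 0)
    (A : Matrix.SpecialLinearGroup (Fin 2) ℤ)
    (hA : A = negI * (List.ofFn fun i => Xm ^ (a i : ℤ) * Ym ^ (-(b i : ℤ))).prod) :
    Matrix.trace (A : Matrix (Fin 2) (Fin 2) ℤ) < -2 := by
  obtain ⟨i, hi⟩ := ha
  obtain ⟨j, hj⟩ := hb
  set B := (List.ofFn fun i => Xm ^ (a i : ℤ) * Ym ^ (-(b i : ℤ))).prod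
  set L : List (Matrix (Fin 2) (Fin 2) ℤ) :=
    List.ofFn fun k => !![1 + (a k : ℤ) * b k, (a k : ℤ); b k, 1] with hL
  have hB : (B : Matrix (Fin 2) (Fin 2) ℤ) = L.prod := by
    rw [← Matrix.SpecialLinearGroup.coeMonoidHom_apply, map_list_prod, List.map_ofFn]
    simp only [Function.comp_def, Matrix.SpecialLinearGroup.coeMonoidHom_apply,
      coe_Xm_zpow_mul_Ym_zpow_neg, hL]
  have hmem : ∀ M ∈ L, M ∈ oneLESubmonoid (Fin 2) ℤ := by
    simp only [hL, List.mem_ofFn]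
    rintro _ ⟨k, rfl⟩
    exact fin_two_mem_oneLESubmonoid_of_nonneg (Int.natCast_nonneg _) (Int.natCast_nonneg _)
  have h01 : (a i : ℤ) ≤ L.prod 0 1 := by
    simpa using apply_le_list_prod_apply hmem (List.mem_ofFn.2 ⟨i, rfl⟩) 0 1
  have h10 : (b j : ℤ) ≤ L.prod 1 0 := by
    simpa using apply_le_list_prod_apply hmem (List.mem_ofFn.2 ⟨j, rfl⟩) 1 0
  have hdet : L.prod.det = 1 := hB ▸ B.prop
  rw [hA, Matrix.SpecialLinearGroup.coe_mul, coe_negI, neg_one_mul, trace_neg, hB, neg_lt_neg_iff]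
  exact two_lt_trace_of_det_eq_one (Submonoid.list_prod_mem _ hmem) hdet
    (mul_pos (by omega) (by omega))
end

section
/- For n ≥ 1 and nonnegative reals b_1, …, b_n with at least one b_i > 0, the determinant C(b_1,…,b_n) defined via the recursion C(b_1,…,b_n) = C(b_1,…,b_{n-2}, b_{n-1}+b_n) + b_n·D(b_1,…,b_{n-1}) + [D(b_1,…,b_{n-1}) - D(b_2,…,b_{n-1})], with C of one variable given by C(b_1) = b_1 + 4 (the 1×1 case), is positive and non-decreasing in the variable b_n. -/
/-!
`D(b) = det (1 + S)` with `S = ∑ₜ bₜ vₜ vₜᵀ` positive semidefinite, so `D ≥ 0`. Expanding along the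
last diagonal entry, `D(b₁,…,bₙ) - D(b₂,…,bₙ)` is the determinant of `1 + S` with that entry's `1`
removed, still positive semidefinite, so `D` can only drop when `b₁` is deleted. In the recursion for
`C` every summand is therefore nonnegative, and by induction the first one is positive and
increasing in `bₙ`, while the second is increasing in `bₙ` because `D ≥ 0`.
-/

open Matrix Finset

def Dmat (n : ℕ) (b : Fin n → ℝ) : Matrix (Fin n) (Fin n) ℝ :=
  fun i j => (∑ t : Fin n, if n - 1 - min i.1 j.1 ≤ t.1 then b t else 0) +
    (if i = j then 1 else 0)

noncomputable def D (n : ℕ) (b : Fin n → ℝ) : ℝ := (Dmat n b).det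

/-- The determinant `C(b_1,…,b_n)` from the Appendix, defined via the recursion
`C(b_1,…,b_n) = C(b_1,…,b_{n-2}, b_{n-1}+b_n) + b_n·D(b_1,…,b_{n-1})
  + [D(b_1,…,b_{n-1}) − D(b_2,…,b_{n-1})]`, with `C(b_1) = b_1 + 4`. -/
noncomputable def C : (n : ℕ) → (Fin n → ℝ) → ℝ
  | 0, _ => 4
  | 1, b => b 0 + 4
  | (n + 2), b =>
      C (n + 1) (fun i => if i.1 = n then b i.castSucc + b (Fin.last (n + 1))
        else b i.castSucc)
      + b (Fin.last (n + 1)) * D (n + 1) (fun i => b i.castSucc)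
      + (D (n + 1) (fun i => b i.castSucc) - D n (fun i => b i.succ.castSucc))

theorem Matrix.det_sub_single_self {R : Type*} [CommRing R] {n : ℕ}
    (B : Matrix (Fin (n + 1)) (Fin (n + 1)) R) (i : Fin (n + 1)) (c : R) :
    (B - single i i c).det = B.det - c * (B.submatrix i.succAbove i.succAbove).det := by
  have hrow : B - single i i c = B.updateRow i (B i + (-c) • Pi.single i 1) := by
    ext j k
    by_cases hj : j = i
    · subst hj
      obtain rfl | hk := eq_or_ne k j
      · simp [sub_eq_add_neg]
      · simp [hk, Ne.symm hk]
    · simp [hj, Ne.symm hj]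
  rw [hrow, det_updateRow_add, det_updateRow_smul, updateRow_eq_self, ← adjugate_apply,
    adjugate_fin_succ_eq_det_submatrix, ← two_mul, pow_mul]
  simp [sub_eq_add_neg]

def suffixIndicator (n : ℕ) (t : Fin n) : Fin n → ℝ :=
  fun i => if n - 1 ≤ i.1 + t.1 then 1 else 0

noncomputable def Smat (n : ℕ) (b : Fin n → ℝ) : Matrix (Fin n) (Fin n) ℝ :=
  ∑ t, b t • vecMulVec (suffixIndicator n t) (suffixIndicator n t)

theorem Smat_posSemidef {n : ℕ} {b : Fin n → ℝ} (hb : ∀ i, 0 ≤ b i) : (Smat n b).PosSemidef :=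
  posSemidef_sum _ fun t _ => by
    simpa using (posSemidef_vecMulVec_self_star (suffixIndicator n t)).smul (hb t)

theorem Dmat_eq_Smat_add_one (n : ℕ) (b : Fin n → ℝ) : Dmat n b = Smat n b + 1 := by
  ext i j
  simp only [Dmat, Smat, suffixIndicator, Matrix.add_apply, Matrix.sum_apply, Matrix.smul_apply,
    vecMulVec_apply, one_apply, smul_eq_mul, mul_ite, mul_one, mul_zero]
  congr 1
  refine Finset.sum_congr rfl fun t _ => ?_
  have := i.isLt; have := j.isLt
  split_ifs <;> first | rfl | omega

theorem D_nonneg {n : ℕ} {b : Fin n → ℝ} (hb : ∀ i, 0 ≤ b i) : 0 ≤ D n b := by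
  rw [D, Dmat_eq_Smat_add_one]
  exact ((Smat_posSemidef hb).add .one).det_nonneg

theorem Dmat_submatrix_castSucc (n : ℕ) (b : Fin (n + 1) → ℝ) :
    (Dmat (n + 1) b).submatrix Fin.castSucc Fin.castSucc = Dmat n (Fin.tail b) := by
  ext i j
  simp only [submatrix_apply, Dmat, Fin.val_castSucc, Fin.castSucc_inj]
  congr 1
  rw [Fin.sum_univ_succ, if_neg (by simp only [Fin.val_zero]; omega), zero_add]
  refine Finset.sum_congr rfl fun t _ => ?_
  congr 1
  rw [Fin.val_succ]
  apply propext
  omega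

theorem D_tail_le (n : ℕ) {b : Fin (n + 1) → ℝ} (hb : ∀ i, 0 ≤ b i) :
    D n (Fin.tail b) ≤ D (n + 1) b := by
  have hpsd : (Dmat (n + 1) b - single (Fin.last n) (Fin.last n) 1).PosSemidef := by
    have : Dmat (n + 1) b - single (Fin.last n) (Fin.last n) 1 =
        Smat (n + 1) b + diagonal (Function.update 1 (Fin.last n) 0) := by
      rw [Dmat_eq_Smat_add_one, add_sub_assoc, ← diagonal_one, ← diagonal_single, diagonal_sub]
      congr 2
      ext k
      by_cases hk : k = Fin.last n <;> simp [hk]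
    rw [this]
    refine (Smat_posSemidef hb).add (.diagonal fun k => ?_)
    by_cases hk : k = Fin.last n <;> simp [hk]
  have := hpsd.det_nonneg
  rw [det_sub_single_self, Fin.succAbove_last, Dmat_submatrix_castSucc, one_mul] at this
  exact sub_nonneg.mp this

theorem C_one (b : Fin 1 → ℝ) : C 1 b = b 0 + 4 := rfl

theorem C_succ_succ_update_last (n : ℕ) (b : Fin (n + 2) → ℝ) (c : ℝ) :
    C (n + 2) (Function.update b (Fin.last (n + 1)) c) =
      C (n + 1) (Function.update (Fin.init b) (Fin.last n) (Fin.init b (Fin.last n) + c))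
        + c * D (n + 1) (Fin.init b) + (D (n + 1) (Fin.init b) - D n (Fin.tail (Fin.init b))) := by
  rw [C, Function.update_self]
  change C (n + 1) (fun i => if i.1 = n then Fin.init (Function.update b _ c) i + c
      else Fin.init (Function.update b _ c) i) + c * D (n + 1) (Fin.init (Function.update b _ c))
    + (D (n + 1) (Fin.init (Function.update b _ c))
      - D n (Fin.tail (Fin.init (Function.update b _ c)))) = _
  rw [Fin.init_update_last]
  congr 3
  funext i
  obtain rfl | hi := eq_or_ne i (Fin.last n)
  · simp
  · have hi' : i.1 ≠ n := fun h => hi (Fin.ext h)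
    simp [hi, hi']

theorem C_pos_and_monotone_general (n : ℕ) (b : Fin (n + 1) → ℝ)
    (hb : ∀ i, 0 ≤ b i) :
    0 < C (n + 1) b ∧
    ∀ c : ℝ, b (Fin.last n) ≤ c →
      C (n + 1) b ≤ C (n + 1) (Function.update b (Fin.last n) c) := by
  induction n with
  | zero =>
    refine ⟨by linarith [hb 0, C_one b], fun c hc => ?_⟩
    simpa [C_one] using hc
  | succ n ih =>
    set a := Fin.init b
    have ha : ∀ i, 0 ≤ a i := fun i => hb _
    have hC := C_succ_succ_update_last n b
    have hCb := hC (b (Fin.last (n + 1)))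
    rw [Function.update_eq_self] at hCb
    obtain ⟨hpos, hmono⟩ := ih (Function.update a (Fin.last n) (a (Fin.last n) + b (Fin.last _)))
      ((Function.forall_update_iff _ fun _ x => 0 ≤ x).mpr ⟨add_nonneg (ha _) (hb _), fun i _ => ha i⟩)
    have hD := D_nonneg ha
    have hDtail := D_tail_le n ha
    have hlast := hb (Fin.last (n + 1))
    refine ⟨by rw [hCb]; nlinarith, fun c hc => ?_⟩
    have hCm := hmono (a (Fin.last n) + c) (by simpa using hc)
    rw [Function.update_idem] at hCm
    rw [hCb, hC]
    nlinarith

/-- For `n ≥ 1` and nonnegative `b_1,…,b_n` with some `b_i > 0`, `C(b_1,…,b_n)` is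
positive and non-decreasing in the last variable `b_n`. -/
theorem C_pos_and_monotone (n : ℕ) (b : Fin (n + 1) → ℝ)
    (hb : ∀ i, 0 ≤ b i) (hb' : ∃ i, 0 < b i) :
    0 < C (n + 1) b ∧
    ∀ c : ℝ, b (Fin.last n) ≤ c →
      C (n + 1) b ≤ C (n + 1) (Function.update b (Fin.last n) c) :=
  C_pos_and_monotone_general n b hb
end
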